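/- Let A = (a₀, ..., a_{n−1}) and B = (b₀, ..., b_{m−1}) be lists of nonnegative integers bounded by M, let q be a prime, and fix y with y = a_i + b_j for some i, j. Suppose that for every j' with b_{j'} ≠ b_j it holds that q does not divide b_{j'} − b_j. Then for this i, the minimal index j* ∈ [m] satisfying a_i + b_{j*} ≡ y (mod q) satisfies b_{j*} = b_j, and hence a_i + b_{j*} = y. -/
import Mathlib


theorem stmt_14 (n m M : ℕ) (a : Fin n → ℕ) (b : Fin m → ℕ)
    (ha : ∀ i, a i ≤ M) (hb : ∀ j, b j ≤ M)
    (q : ℕ) (hq : q.Prime)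
    (i : Fin n) (j : Fin m) (y : ℕ) (hy : y = a i + b j)
    (hnocoll : ∀ j' : Fin m, b j' ≠ b j → ¬ ((q : ℤ) ∣ ((b j' : ℤ) - (b j : ℤ))))
    (jstar : Fin m)
    (hcong : a i + b jstar ≡ y [MOD q])
    (hmin : ∀ j'' : Fin m, (j'' : ℕ) < (jstar : ℕ) → ¬ (a i + b j'' ≡ y [MOD q])) :
    b jstar = b j ∧ a i + b jstar = y := by
  have heq : b jstar = b j := by
    by_contra hne
    apply hnocoll jstar hne
    have h1 : (a i + b jstar : ℤ) ≡ (a i + b j : ℤ) [ZMOD q] := by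
      have := hcong
      rw [hy] at this
      have h2 : ((a i + b jstar : ℕ) : ℤ) ≡ ((a i + b j : ℕ) : ℤ) [ZMOD q] :=
        Int.natCast_modEq_iff.mpr this
      push_cast at h2
      exact h2
    exact Int.ModEq.dvd (Int.ModEq.add_left_cancel' _ h1.symm)
  exact ⟨heq, by rw [heq, hy]⟩
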